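/- arXiv:1904.08522 — 4 statements merged into one kernel-verified Lean document; each statement's English description precedes it below -/
import Mathlib

section
/- Let m₀Y, m₀S, m₁Y, ΔS, y̲, ȳ ∈ ℝ with m₀S > 0, ΔS > 0, and suppose there exist a, b ∈ [y̲, ȳ] with m₁Y = a·m₀S + b·ΔS and c ∈ [y̲, ȳ] with m₀Y = c·m₀S. Then the treatment effect δ := a − c satisfies max{(m₁Y − ȳ·ΔS)/m₀S, y̲} − m₀Y/m₀S ≤ δ ≤ min{(m₁Y − y̲·ΔS)/m₀S, ȳ} − m₀Y/m₀S. -/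
/-! Since `b` ranges over `[y̲, ȳ]` and `ΔS > 0`, solving `m₁Y = a·m₀S + b·ΔS` for `a` traps `a`
between `(m₁Y - ȳ·ΔS)/m₀S` and `(m₁Y - y̲·ΔS)/m₀S`; intersecting with `a ∈ [y̲, ȳ]` and subtracting
`c = m₀Y/m₀S` gives the bounds on `δ = a - c`. -/

section MixtureBounds

variable {m s d a b : ℝ}

theorem sub_mul_div_le_of_eq_mul_add_mul {hi : ℝ} (hs : 0 < s) (hd : 0 ≤ d) (hb : b ≤ hi)
    (h : m = a * s + b * d) : (m - hi * d) / s ≤ a := by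
  rw [div_le_iff₀ hs, h]
  nlinarith

theorem le_sub_mul_div_of_eq_mul_add_mul {lo : ℝ} (hs : 0 < s) (hd : 0 ≤ d) (hb : lo ≤ b)
    (h : m = a * s + b * d) : a ≤ (m - lo * d) / s := by
  rw [le_div_iff₀ hs, h]
  nlinarith

theorem mem_Icc_max_min_of_eq_mul_add_mul {lo hi : ℝ} (hs : 0 < s) (hd : 0 ≤ d)
    (ha : a ∈ Set.Icc lo hi) (hb : b ∈ Set.Icc lo hi) (h : m = a * s + b * d) :
    a ∈ Set.Icc (max ((m - hi * d) / s) lo) (min ((m - lo * d) / s) hi) :=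
  ⟨max_le (sub_mul_div_le_of_eq_mul_add_mul hs hd hb.2 h) ha.1,
    le_min (le_sub_mul_div_of_eq_mul_add_mul hs hd hb.1 h) ha.2⟩

end MixtureBounds

theorem stmt_3_general (m₀Y m₀S m₁Y ΔS ylo yhi a b c : ℝ)
    (hm₀S : 0 < m₀S) (hΔS : 0 < ΔS)
    (ha : a ∈ Set.Icc ylo yhi) (hb : b ∈ Set.Icc ylo yhi)
    (hdec : m₁Y = a * m₀S + b * ΔS) (hc' : m₀Y = c * m₀S) :
    max ((m₁Y - yhi * ΔS) / m₀S) ylo - m₀Y / m₀S ≤ a - c ∧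
      a - c ≤ min ((m₁Y - ylo * ΔS) / m₀S) yhi - m₀Y / m₀S := by
  have hc : m₀Y / m₀S = c := by rw [hc', mul_div_cancel_right₀ c hm₀S.ne']
  obtain ⟨hlower, hupper⟩ := mem_Icc_max_min_of_eq_mul_add_mul hm₀S hΔS.le ha hb hdec
  rw [hc]
  exact ⟨sub_le_sub_right hlower c, sub_le_sub_right hupper c⟩

/-- Bounds for the MTE within the always-observed subpopulation
(Corollary 3.2, bounded-support case). -/
theorem stmt_3 (m₀Y m₀S m₁Y ΔS ylo yhi a b c : ℝ)
    (hm₀S : 0 < m₀S) (hΔS : 0 < ΔS)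
    (ha : a ∈ Set.Icc ylo yhi) (hb : b ∈ Set.Icc ylo yhi) (hc : c ∈ Set.Icc ylo yhi)
    (hdec : m₁Y = a * m₀S + b * ΔS) (hc' : m₀Y = c * m₀S) :
    max ((m₁Y - yhi * ΔS) / m₀S) ylo - m₀Y / m₀S ≤ a - c ∧
      a - c ≤ min ((m₁Y - ylo * ΔS) / m₀S) yhi - m₀Y / m₀S :=
  stmt_3_general m₀Y m₀S m₁Y ΔS ylo yhi a b c hm₀S hΔS ha hb hdec hc'
end

section
/- Let m₀S, ΔS, m₀Y, m₁Y ∈ ℝ with m₀S > 0 and ΔS > 0, and let δ, α, γ ∈ ℝ with α = δ + m₀Y/m₀S and γ = (m₁Y − α·m₀S)/ΔS. Let y̲ < ȳ be reals. Then δ ∈ (max{(m₁Y − ȳΔS)/m₀S, y̲} − m₀Y/m₀S, min{(m₁Y − y̲ΔS)/m₀S, ȳ} − m₀Y/m₀S) if and only if both α ∈ (y̲, ȳ) and γ ∈ (y̲, ȳ). -/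
/-- Sanity equivalence from the sharpness proof: δ lies strictly between the MTE
bounds iff both α and γ lie in the open support interval (y̲, ȳ). -/
theorem stmt_6 (m₀S ΔS m₀Y m₁Y δ α γ ylo yhi : ℝ)
    (hm₀S : 0 < m₀S) (hΔS : 0 < ΔS)
    (hα : α = δ + m₀Y / m₀S) (hγ : γ = (m₁Y - α * m₀S) / ΔS)
    (hy : ylo < yhi) :
    δ ∈ Set.Ioo (max ((m₁Y - yhi * ΔS) / m₀S) ylo - m₀Y / m₀S)
        (min ((m₁Y - ylo * ΔS) / m₀S) yhi - m₀Y / m₀S)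
      ↔ α ∈ Set.Ioo ylo yhi ∧ γ ∈ Set.Ioo ylo yhi := by
  subst hγ hα
  simp only [Set.mem_Ioo, sub_lt_iff_lt_add, lt_sub_iff_add_lt, max_lt_iff, lt_min_iff,
    div_lt_iff₀ hΔS, lt_div_iff₀ hΔS, div_lt_iff₀ hm₀S, lt_div_iff₀ hm₀S, div_add' _ _ _ hm₀S.ne',
    div_lt_div_iff₀ hm₀S hm₀S]
  constructor
  · rintro ⟨⟨h1, h2⟩, h3, h4⟩
    refine ⟨⟨?_, ?_⟩, ?_, ?_⟩ <;> nlinarith [mul_pos hm₀S hΔS]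
  · rintro ⟨⟨h1, h2⟩, h3, h4⟩
    refine ⟨⟨?_, ?_⟩, ?_, ?_⟩ <;> nlinarith [mul_pos hm₀S hΔS]
end

section
/- Let m₀S, m₁S, m₀Y, m₁Y, y̲, ȳ ∈ ℝ with y̲ < ȳ, 0 < m₀S, 0 < m₁S ≤ 1, ȳ·m_dS − m_dY > 0 and m_dY − y̲·m_dS > 0 for d ∈ {0,1}. For a₀, a₁ ∈ (y̲, ȳ), define π = (1/2)·min over d ∈ {0,1} of min{ m_dS, (ȳ·m_dS − m_dY)/(ȳ − a_d), (m_dY − y̲·m_dS)/(a_d − y̲) }. Then 0 < π < min{m₀S + m₁S, 1}, and moreover γ_d := (m_dY − a_d·π)/(m_dS − π) satisfies γ_d ∈ (y̲, ȳ) for each d ∈ {0,1}. -/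
lemma gamma_aux (mS mY ylo yhi a π γ : ℝ)
    (hm : 0 < mS) (ha1 : ylo < a) (ha2 : a < yhi)
    (hπ0 : 0 < π) (hπS : π < mS)
    (hπhi : π < (yhi * mS - mY) / (yhi - a))
    (hπlo : π < (mY - ylo * mS) / (a - ylo))
    (hγ : γ = (mY - a * π) / (mS - π)) :
    γ ∈ Set.Ioo ylo yhi := by
  have hden : 0 < mS - π := by linarith
  have h1 : π * (yhi - a) < yhi * mS - mY := by
    have := (lt_div_iff₀ (by linarith : (0:ℝ) < yhi - a)).mp hπhi
    linarith
  have h2 : π * (a - ylo) < mY - ylo * mS := by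
    have := (lt_div_iff₀ (by linarith : (0:ℝ) < a - ylo)).mp hπlo
    linarith
  constructor
  · rw [hγ, lt_div_iff₀ hden]; nlinarith
  · rw [hγ, div_lt_iff₀ hden]; nlinarith

/-- Key construction for the non-monotone-selection impossibility result:
the mass π on the always-observed stratum satisfies 0 < π < min{m₀S+m₁S, 1},
and the induced means γ_d on the remaining strata lie in (y̲, ȳ). -/
theorem stmt_16 (m₀S m₁S m₀Y m₁Y ylo yhi a₀ a₁ π γ₀ γ₁ : ℝ)
    (hy : ylo < yhi) (hm₀S : 0 < m₀S) (hm₁Spos : 0 < m₁S) (hm₁S : m₁S ≤ 1)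
    (hreg0hi : 0 < yhi * m₀S - m₀Y) (hreg0lo : 0 < m₀Y - ylo * m₀S)
    (hreg1hi : 0 < yhi * m₁S - m₁Y) (hreg1lo : 0 < m₁Y - ylo * m₁S)
    (ha₀ : a₀ ∈ Set.Ioo ylo yhi) (ha₁ : a₁ ∈ Set.Ioo ylo yhi)
    (hπ : π = (1/2) * min
        (min m₀S (min ((yhi * m₀S - m₀Y) / (yhi - a₀)) ((m₀Y - ylo * m₀S) / (a₀ - ylo))))
        (min m₁S (min ((yhi * m₁S - m₁Y) / (yhi - a₁)) ((m₁Y - ylo * m₁S) / (a₁ - ylo)))))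
    (hγ₀ : γ₀ = (m₀Y - a₀ * π) / (m₀S - π))
    (hγ₁ : γ₁ = (m₁Y - a₁ * π) / (m₁S - π)) :
    0 < π ∧ π < min (m₀S + m₁S) 1 ∧
      γ₀ ∈ Set.Ioo ylo yhi ∧ γ₁ ∈ Set.Ioo ylo yhi := by
  obtain ⟨ha₀1, ha₀2⟩ := ha₀
  obtain ⟨ha₁1, ha₁2⟩ := ha₁
  have h0hi : 0 < (yhi * m₀S - m₀Y) / (yhi - a₀) := div_pos hreg0hi (by linarith)
  have h0lo : 0 < (m₀Y - ylo * m₀S) / (a₀ - ylo) := div_pos hreg0lo (by linarith)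
  have h1hi : 0 < (yhi * m₁S - m₁Y) / (yhi - a₁) := div_pos hreg1hi (by linarith)
  have h1lo : 0 < (m₁Y - ylo * m₁S) / (a₁ - ylo) := div_pos hreg1lo (by linarith)
  have hπ0 : 0 < π := by
    rw [hπ]; positivity
  have hπle0 : π ≤ (1/2) * m₀S := by
    rw [hπ]
    have := min_le_left (min m₀S (min ((yhi * m₀S - m₀Y) / (yhi - a₀)) ((m₀Y - ylo * m₀S) / (a₀ - ylo)))) (min m₁S (min ((yhi * m₁S - m₁Y) / (yhi - a₁)) ((m₁Y - ylo * m₁S) / (a₁ - ylo))))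
    have h2 := min_le_left m₀S (min ((yhi * m₀S - m₀Y) / (yhi - a₀)) ((m₀Y - ylo * m₀S) / (a₀ - ylo)))
    linarith
  have hπle0hi : π ≤ (1/2) * ((yhi * m₀S - m₀Y) / (yhi - a₀)) := by
    rw [hπ]
    have h1 := min_le_left (min m₀S (min ((yhi * m₀S - m₀Y) / (yhi - a₀)) ((m₀Y - ylo * m₀S) / (a₀ - ylo)))) (min m₁S (min ((yhi * m₁S - m₁Y) / (yhi - a₁)) ((m₁Y - ylo * m₁S) / (a₁ - ylo))))
    have h2 : min m₀S (min ((yhi * m₀S - m₀Y) / (yhi - a₀)) ((m₀Y - ylo * m₀S) / (a₀ - ylo))) ≤ (yhi * m₀S - m₀Y) / (yhi - a₀) :=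
      le_trans (min_le_right _ _) (min_le_left _ _)
    linarith
  have hπle0lo : π ≤ (1/2) * ((m₀Y - ylo * m₀S) / (a₀ - ylo)) := by
    rw [hπ]
    have h1 := min_le_left (min m₀S (min ((yhi * m₀S - m₀Y) / (yhi - a₀)) ((m₀Y - ylo * m₀S) / (a₀ - ylo)))) (min m₁S (min ((yhi * m₁S - m₁Y) / (yhi - a₁)) ((m₁Y - ylo * m₁S) / (a₁ - ylo))))
    have h2 : min m₀S (min ((yhi * m₀S - m₀Y) / (yhi - a₀)) ((m₀Y - ylo * m₀S) / (a₀ - ylo))) ≤ (m₀Y - ylo * m₀S) / (a₀ - ylo) :=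
      le_trans (min_le_right _ _) (min_le_right _ _)
    linarith
  have hπle1 : π ≤ (1/2) * m₁S := by
    rw [hπ]
    have h1 := min_le_right (min m₀S (min ((yhi * m₀S - m₀Y) / (yhi - a₀)) ((m₀Y - ylo * m₀S) / (a₀ - ylo)))) (min m₁S (min ((yhi * m₁S - m₁Y) / (yhi - a₁)) ((m₁Y - ylo * m₁S) / (a₁ - ylo))))
    have h2 := min_le_left m₁S (min ((yhi * m₁S - m₁Y) / (yhi - a₁)) ((m₁Y - ylo * m₁S) / (a₁ - ylo)))
    linarith
  have hπle1hi : π ≤ (1/2) * ((yhi * m₁S - m₁Y) / (yhi - a₁)) := by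
    rw [hπ]
    have h1 := min_le_right (min m₀S (min ((yhi * m₀S - m₀Y) / (yhi - a₀)) ((m₀Y - ylo * m₀S) / (a₀ - ylo)))) (min m₁S (min ((yhi * m₁S - m₁Y) / (yhi - a₁)) ((m₁Y - ylo * m₁S) / (a₁ - ylo))))
    have h2 : min m₁S (min ((yhi * m₁S - m₁Y) / (yhi - a₁)) ((m₁Y - ylo * m₁S) / (a₁ - ylo))) ≤ (yhi * m₁S - m₁Y) / (yhi - a₁) :=
      le_trans (min_le_right _ _) (min_le_left _ _)
    linarith
  have hπle1lo : π ≤ (1/2) * ((m₁Y - ylo * m₁S) / (a₁ - ylo)) := by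
    rw [hπ]
    have h1 := min_le_right (min m₀S (min ((yhi * m₀S - m₀Y) / (yhi - a₀)) ((m₀Y - ylo * m₀S) / (a₀ - ylo)))) (min m₁S (min ((yhi * m₁S - m₁Y) / (yhi - a₁)) ((m₁Y - ylo * m₁S) / (a₁ - ylo))))
    have h2 : min m₁S (min ((yhi * m₁S - m₁Y) / (yhi - a₁)) ((m₁Y - ylo * m₁S) / (a₁ - ylo))) ≤ (m₁Y - ylo * m₁S) / (a₁ - ylo) :=
      le_trans (min_le_right _ _) (min_le_right _ _)
    linarith
  refine ⟨hπ0, ?_, ?_, ?_⟩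
  · exact lt_min (by linarith) (by linarith)
  · exact gamma_aux m₀S m₀Y ylo yhi a₀ π γ₀ hm₀S ha₀1 ha₀2 hπ0
      (by linarith) (by linarith) (by linarith) hγ₀
  · exact gamma_aux m₁S m₁Y ylo yhi a₁ π γ₁ hm₁Spos ha₁1 ha₁2 hπ0
      (by linarith) (by linarith) (by linarith) hγ₁
end

section
/- Let m₀S, ΔS, m₀Y, m₁Y ∈ ℝ with m₀S > 0, ΔS > 0, m₁S = m₀S + ΔS, and let y̲ ∈ ℝ with c := m₀Y/m₀S ≥ y̲ and m₁Y/m₁S ≥ y̲. Then under mean dominance the identified interval [m₁Y/m₁S − m₀Y/m₀S, (m₁Y − y̲·ΔS)/m₀S − m₀Y/m₀S] is nonempty, i.e., m₁Y/m₁S ≤ (m₁Y − y̲·ΔS)/m₀S. -/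
/-- Under mean dominance (support bounded below), the identified interval is
nonempty: m₁Y/m₁S ≤ (m₁Y − y̲·ΔS)/m₀S, hence the lower bound
m₁Y/m₁S − m₀Y/m₀S does not exceed the upper bound
(m₁Y − y̲·ΔS)/m₀S − m₀Y/m₀S. -/
theorem stmt_17 (m₀S ΔS m₀Y m₁Y m₁S ylo : ℝ)
    (hm₀S : 0 < m₀S) (hΔS : 0 < ΔS) (hm₁S : m₁S = m₀S + ΔS)
    (hc : ylo ≤ m₀Y / m₀S) (hmean : ylo ≤ m₁Y / m₁S) :
    m₁Y / m₁S ≤ (m₁Y - ylo * ΔS) / m₀S ∧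
      m₁Y / m₁S - m₀Y / m₀S ≤ (m₁Y - ylo * ΔS) / m₀S - m₀Y / m₀S := by
  have h1 : 0 < m₁S := by linarith
  have hy : ylo * m₁S ≤ m₁Y := (le_div_iff₀ h1).mp hmean
  have key : m₁Y / m₁S ≤ (m₁Y - ylo * ΔS) / m₀S := by
    rw [div_le_div_iff₀ h1 hm₀S]
    subst hm₁S
    nlinarith [mul_nonneg hΔS.le (sub_nonneg.mpr hy)]
  exact ⟨key, by linarith⟩
end
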